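/- arXiv:0903.1452 — 5 statements merged into one kernel-verified Lean document; each statement's English description precedes it below -/
import Mathlib

section
/- Every finite multiset of nonzero complex numbers {b_1,…,b_s} (with q ∈ ℂ* not a root of unity) can be written uniquely as a disjoint union of q-segments Σ(k_i, a_i) such that every pair of these segments is in general position. -/
def segSet (q a : ℂ) (k : ℕ) : Set ℂ := {x | ∃ j < k, x = a * q ^ (2 * j)}

def segMultiset (q a : ℂ) (k : ℕ) : Multiset ℂ :=
  (Multiset.range k).map fun j => a * q ^ (2 * j)

def SpecialPos (q : ℂ) (p p' : ℕ × ℂ) : Prop :=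
  ¬ segSet q p.2 p.1 ⊆ segSet q p'.2 p'.1 ∧
  ¬ segSet q p'.2 p'.1 ⊆ segSet q p.2 p.1 ∧
  ∃ (k : ℕ) (a : ℂ), 1 ≤ k ∧ a ≠ 0 ∧
    segSet q p.2 p.1 ∪ segSet q p'.2 p'.1 = segSet q a k

namespace SegAux

variable {q : ℂ}

lemma zpow_eq_one_iff (hq0 : q ≠ 0) (hq : ∀ m : ℕ, m ≠ 0 → q ^ m ≠ 1)
    (n : ℤ) (h : q ^ n = 1) : n = 0 := by
  rcases n.eq_nat_or_neg with ⟨m, rfl | rfl⟩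
  · rw [zpow_natCast] at h
    by_contra hne
    exact hq m (by exact_mod_cast hne) h
  · rw [zpow_neg, zpow_natCast, inv_eq_one] at h
    by_contra hne
    exact hq m (fun h0 => hne (by simp [h0])) h

lemma zpow_inj (hq0 : q ≠ 0) (hq : ∀ m : ℕ, m ≠ 0 → q ^ m ≠ 1)
    {m n : ℤ} (h : q ^ m = q ^ n) : m = n := by
  have h1 : q ^ (m - n) = 1 := by
    rw [zpow_sub₀ hq0, h, div_self (zpow_ne_zero _ hq0)]
  have := zpow_eq_one_iff hq0 hq _ h1
  omega

lemma pow_inj (hq0 : q ≠ 0) (hq : ∀ m : ℕ, m ≠ 0 → q ^ m ≠ 1)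
    {m n : ℕ} (h : q ^ m = q ^ n) : m = n := by
  have : (m : ℤ) = n := by
    apply zpow_inj hq0 hq
    rw [zpow_natCast, zpow_natCast, h]
  omega

lemma shift_eq (hq0 : q ≠ 0) (x : ℂ) (d : ℤ) (j : ℕ) :
    (x * q ^ (2*d)) * q ^ (2*j) = x * q ^ (2*(d+j)) := by
  rw [← zpow_natCast q (2*j), mul_assoc, ← zpow_add₀ hq0]
  congr 1
  push_cast
  ring

lemma npow_eq_zpow (x : ℂ) (j : ℕ) : x * q ^ (2*j) = x * q ^ (2*(j:ℤ)) := by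
  have h : ((2*j : ℕ) : ℤ) = 2*(j:ℤ) := by push_cast; ring
  rw [← h, zpow_natCast]

lemma mem_segSet {y a : ℂ} {k : ℕ} :
    y ∈ segSet q a k ↔ ∃ j, j < k ∧ y = a * q ^ (2*j) := by
  simp [segSet]

lemma mem_segSet_zpow (hq0 : q ≠ 0) (hq : ∀ m : ℕ, m ≠ 0 → q ^ m ≠ 1)
    {x : ℂ} (hx : x ≠ 0) (d n : ℤ) (k : ℕ) :
    x * q ^ (2*n) ∈ segSet q (x * q ^ (2*d)) k ↔ d ≤ n ∧ n < d + k := by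
  rw [mem_segSet]
  constructor
  · rintro ⟨j, hj, he⟩
    rw [shift_eq hq0 x d j] at he
    have h2 : 2*n = 2*(d + j) := zpow_inj hq0 hq (mul_left_cancel₀ hx he)
    omega
  · rintro ⟨h1, h2⟩
    refine ⟨(n - d).toNat, by omega, ?_⟩
    rw [shift_eq hq0 x d]
    congr 2
    omega

lemma mem_segSet_zpow0 (hq0 : q ≠ 0) (hq : ∀ m : ℕ, m ≠ 0 → q ^ m ≠ 1)
    {x : ℂ} (hx : x ≠ 0) (n : ℤ) (k : ℕ) :
    x * q ^ (2*n) ∈ segSet q x k ↔ 0 ≤ n ∧ n < k := by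
  have := mem_segSet_zpow hq0 hq hx 0 n k
  simpa using this

lemma mem_segMultiset {y a : ℂ} {k : ℕ} :
    y ∈ segMultiset q a k ↔ y ∈ segSet q a k := by
  simp [segMultiset, segSet, eq_comm]

lemma segMultiset_nodup (hq0 : q ≠ 0) (hq : ∀ m : ℕ, m ≠ 0 → q ^ m ≠ 1)
    {a : ℂ} (ha : a ≠ 0) (k : ℕ) : (segMultiset q a k).Nodup := by
  refine Multiset.Nodup.map_on ?_ (Multiset.nodup_range k)
  intro i _ j _ h
  have := pow_inj hq0 hq (mul_left_cancel₀ ha h)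
  omega

lemma card_segMultiset (a : ℂ) (k : ℕ) : (segMultiset q a k).card = k := by
  simp [segMultiset]

lemma specialPos_symm {p p' : ℕ × ℂ} (h : SpecialPos q p p') : SpecialPos q p' p := by
  obtain ⟨h1, h2, k, a, hk, ha, hu⟩ := h
  exact ⟨h2, h1, k, a, hk, ha, by rw [Set.union_comm]; exact hu⟩

lemma mem_sum_map {T : Multiset (ℕ × ℂ)} {y : ℂ} :
    y ∈ (T.map fun p => segMultiset q p.2 p.1).sum ↔
      ∃ p ∈ T, y ∈ segMultiset q p.2 p.1 := by
  induction T using Multiset.induction_on with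
  | empty => simp
  | cons a s ih =>
    simp only [Multiset.map_cons, Multiset.sum_cons, Multiset.mem_add, ih,
      Multiset.mem_cons]
    constructor
    · rintro (h | ⟨p, hp, hy⟩)
      · exact ⟨a, Or.inl rfl, h⟩
      · exact ⟨p, Or.inr hp, hy⟩
    · rintro ⟨p, rfl | hp, hy⟩
      · exact Or.inl hy
      · exact Or.inr ⟨p, hp, hy⟩

lemma seg_le_sum {T : Multiset (ℕ × ℂ)} {p : ℕ × ℂ} (hp : p ∈ T) :
    segMultiset q p.2 p.1 ≤ (T.map fun p => segMultiset q p.2 p.1).sum := by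
  rw [← Multiset.cons_erase hp, Multiset.map_cons, Multiset.sum_cons]
  exact Multiset.le_add_right _ _

lemma seg_le_of_mem (hq0 : q ≠ 0) (hq : ∀ m : ℕ, m ≠ 0 → q ^ m ≠ 1)
    {a : ℂ} (ha : a ≠ 0) {k : ℕ} {M : Multiset ℂ}
    (h : ∀ z ∈ segMultiset q a k, z ∈ M) : segMultiset q a k ≤ M := by
  classical
  rw [Multiset.le_iff_count]
  intro z
  by_cases hz : z ∈ segMultiset q a k
  · calc Multiset.count z (segMultiset q a k) ≤ 1 :=
        Multiset.nodup_iff_count_le_one.mp (segMultiset_nodup hq0 hq ha k) z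
      _ ≤ Multiset.count z M := Multiset.one_le_count_iff_mem.mpr (h z hz)
  · rw [Multiset.count_eq_zero_of_notMem hz]
    exact Nat.zero_le _



/-- The key geometric lemma: a maximal-at-the-bottom segment `Σ(K,x)` of `M`
is in general position with any segment contained in `M`. -/
lemma not_special (hq0 : q ≠ 0) (hq : ∀ m : ℕ, m ≠ 0 → q ^ m ≠ 1)
    {x a' : ℂ} (hx : x ≠ 0) (ha' : a' ≠ 0) {K k' : ℕ} (hK : 1 ≤ K) (hk' : 1 ≤ k')
    {M : Multiset ℂ} (hleft : x * q ^ (2*(-1 : ℤ)) ∉ M)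
    (hright : x * q ^ (2*(K : ℤ)) ∉ M)
    (hsub : ∀ z ∈ segSet q a' k', z ∈ M) :
    ¬ SpecialPos q (K, x) (k', a') := by
  rintro ⟨hns1, hns2, kb, b, hkb, hb0, hun⟩
  simp only at hns1 hns2 hun
  have hxmem : x ∈ segSet q x K := ⟨0, hK, by simp⟩
  have hxb : x ∈ segSet q b kb := by rw [← hun]; exact Or.inl hxmem
  obtain ⟨j0, hj0, hxeq⟩ := mem_segSet.mp hxb
  have hb : b = x * q ^ (2 * (-(j0:ℤ))) := by
    have : b * q ^ (2*j0) * q ^ (2 * (-(j0:ℤ))) = b := by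
      rw [npow_eq_zpow, mul_assoc, ← zpow_add₀ hq0]
      simp
    rw [← this, ← hxeq]
  by_cases horb : ∃ d : ℤ, a' = x * q ^ (2*d)
  · obtain ⟨d, rfl⟩ := horb
    -- all indices of the second segment avoid -1 and K
    have havoid : ∀ j : ℕ, j < k' → (d + j ≠ -1 ∧ d + j ≠ (K:ℤ)) := by
      intro j hj
      have hz : x * q ^ (2*(d + j)) ∈ M := by
        refine hsub _ ⟨j, hj, ?_⟩
        rw [shift_eq hq0]
      constructor
      · intro he; rw [he] at hz; exact hleft hz
      · intro he; rw [he] at hz; exact hright hz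
    have h1 : ¬ (d ≤ -1 ∧ (-1:ℤ) < d + k') := by
      rintro ⟨u, v⟩
      have := havoid (-1 - d).toNat (by omega)
      omega
    have h2 : ¬ (d ≤ (K:ℤ) ∧ (K:ℤ) < d + k') := by
      rintro ⟨u, v⟩
      have := havoid ((K:ℤ) - d).toNat (by omega)
      omega
    have hcase : (0 ≤ d ∧ d + k' ≤ K) ∨ (d + k' ≤ -1) ∨ ((K:ℤ) + 1 ≤ d) := by
      omega
    rcases hcase with ⟨hc1, hc2⟩ | hfar | hfar
    · -- nested: second segment inside the first, contradicting hns2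
      apply hns2
      rintro y ⟨j, hj, rfl⟩
      rw [shift_eq hq0]
      exact (mem_segSet_zpow0 hq0 hq hx _ _).mpr ⟨by omega, by push_cast; omega⟩
    · -- far left: the hole at index -1
      have hmem2 : x * q ^ (2*d) ∈ segSet q b kb := by
        rw [← hun]
        exact Or.inr ⟨0, hk', by simp⟩
      rw [hb] at hmem2 hxb
      have hd := (mem_segSet_zpow hq0 hq hx _ _ _).mp hmem2
      have h0 := (mem_segSet_zpow hq0 hq hx _ _ _).mp
        (by simpa using hxb : x * q ^ (2*(0:ℤ)) ∈ segSet q (x * q ^ (2 * (-(j0:ℤ)))) kb)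
      have hhole : x * q ^ (2*(-1:ℤ)) ∈ segSet q b kb := by
        rw [hb]
        exact (mem_segSet_zpow hq0 hq hx _ _ _).mpr ⟨by omega, by omega⟩
      rw [← hun] at hhole
      rcases hhole with hh | hh
      · have := (mem_segSet_zpow0 hq0 hq hx _ _).mp hh
        omega
      · have := (mem_segSet_zpow hq0 hq hx _ _ _).mp hh
        omega
    · -- far right: the hole at index K
      have hmem2 : x * q ^ (2*d) ∈ segSet q b kb := by
        rw [← hun]
        exact Or.inr ⟨0, hk', by simp⟩
      rw [hb] at hmem2 hxb
      have hd := (mem_segSet_zpow hq0 hq hx _ _ _).mp hmem2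
      have h0 := (mem_segSet_zpow hq0 hq hx _ _ _).mp
        (by simpa using hxb : x * q ^ (2*(0:ℤ)) ∈ segSet q (x * q ^ (2 * (-(j0:ℤ)))) kb)
      have hhole : x * q ^ (2*((K:ℤ))) ∈ segSet q b kb := by
        rw [hb]
        exact (mem_segSet_zpow hq0 hq hx _ _ _).mpr ⟨by omega, by omega⟩
      rw [← hun] at hhole
      rcases hhole with hh | hh
      · have := (mem_segSet_zpow0 hq0 hq hx _ _).mp hh
        omega
      · have := (mem_segSet_zpow hq0 hq hx _ _ _).mp hh
        omega
  · -- different orbits: impossible since both ends lie in the union segment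
    apply horb
    have ha'mem : a' ∈ segSet q b kb := by
      rw [← hun]
      exact Or.inr ⟨0, hk', by simp⟩
    obtain ⟨j1, hj1, he1⟩ := mem_segSet.mp ha'mem
    refine ⟨(j1 : ℤ) - j0, ?_⟩
    rw [he1, hb, npow_eq_zpow, mul_assoc, ← zpow_add₀ hq0]
    congr 1
    ring

lemma decomp_of_zero {q : ℂ} {S : Multiset (ℕ × ℂ)}
    (hlen : ∀ p ∈ S, 1 ≤ p.1 ∧ p.2 ≠ 0)
    (hsum : (0 : Multiset ℂ) = (S.map fun p => segMultiset q p.2 p.1).sum) :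
    S = 0 := by
  by_contra h
  obtain ⟨p, hp⟩ := Multiset.exists_mem_of_ne_zero h
  have h1 : p.2 ∈ segMultiset q p.2 p.1 :=
    mem_segMultiset.mpr ⟨0, (hlen p hp).1, by simp⟩
  have h2 : p.2 ∈ (0 : Multiset ℂ) := by
    rw [hsum]; exact mem_sum_map.mpr ⟨p, hp, h1⟩
  simp at h2

lemma exists_not_mem (hq0 : q ≠ 0) (hq : ∀ m : ℕ, m ≠ 0 → q ^ m ≠ 1)
    {M : Multiset ℂ} {y : ℂ} (hy : y ≠ 0) {f : ℕ → ℤ} (hf : Function.Injective f) :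
    ∃ m : ℕ, y * q ^ (2 * f m) ∉ M := by
  by_contra h
  push_neg at h
  have hinj : Function.Injective (fun m => y * q ^ (2 * f m)) := by
    intro a b hab
    apply hf
    have := zpow_inj hq0 hq (mul_left_cancel₀ hy hab)
    omega
  exact Set.infinite_of_injective_forall_mem hinj h M.finite_toSet

lemma mem_segSet_base (hq0 : q ≠ 0) (hq : ∀ m : ℕ, m ≠ 0 → q ^ m ≠ 1)
    {x : ℂ} (hx : x ≠ 0) {d : ℤ} {k : ℕ} :
    x ∈ segSet q (x * q ^ (2*d)) k ↔ d ≤ 0 ∧ 0 < d + k := by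
  have h := mem_segSet_zpow hq0 hq hx d 0 k
  simpa using h

theorem main_aux (q : ℂ) (hq0 : q ≠ 0) (hq : ∀ m : ℕ, m ≠ 0 → q ^ m ≠ 1) :
    ∀ n (M : Multiset ℂ), M.card ≤ n → (∀ x ∈ M, x ≠ 0) →
    ∃! S : Multiset (ℕ × ℂ),
      (∀ p ∈ S, 1 ≤ p.1 ∧ p.2 ≠ 0) ∧
      M = (S.map fun p => segMultiset q p.2 p.1).sum ∧
      (∀ p ∈ S, ∀ p' ∈ S, ¬ SpecialPos q p p') := by
  intro n
  induction n with
  | zero =>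
    intro M hcard hM
    have hM0 : M = 0 := Multiset.card_eq_zero.mp (Nat.le_zero.mp hcard)
    subst hM0
    refine ⟨0, ⟨by simp, by simp, by simp⟩, ?_⟩
    rintro T ⟨hTlen, hTsum, -⟩
    exact decomp_of_zero hTlen hTsum
  | succ n ih =>
    intro M hcard hM
    classical
    by_cases hM0 : M = 0
    · subst hM0
      refine ⟨0, ⟨by simp, by simp, by simp⟩, ?_⟩
      rintro T ⟨hTlen, hTsum, -⟩
      exact decomp_of_zero hTlen hTsum
    obtain ⟨y, hy⟩ := Multiset.exists_mem_of_ne_zero hM0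
    have hy0 : y ≠ 0 := hM y hy
    -- choose the leftmost element x of the orbit of y inside M
    have hex1 : ∃ m : ℕ, y * q ^ (2 * (-(m:ℤ))) ∉ M :=
      exists_not_mem hq0 hq hy0 (fun a b hab => by omega)
    set n₁ := Nat.find hex1 with hn₁def
    have hn₁ : y * q ^ (2 * (-(n₁:ℤ))) ∉ M := Nat.find_spec hex1
    have hn₁pos : 0 < n₁ := by
      rcases Nat.eq_zero_or_pos n₁ with h0 | h0
      · rw [h0] at hn₁; simp at hn₁; exact absurd hy hn₁
      · exact h0
    set x : ℂ := y * q ^ (2 * (-((n₁ - 1 : ℕ) : ℤ))) with hxdef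
    have hxM : x ∈ M := by
      have h := Nat.find_min hex1 (show n₁ - 1 < n₁ by omega)
      rw [not_not] at h
      exact h
    have hx0 : x ≠ 0 := mul_ne_zero hy0 (zpow_ne_zero _ hq0)
    have hxleft : x * q ^ (2*(-1:ℤ)) ∉ M := by
      have he : x * q ^ (2*(-1:ℤ)) = y * q ^ (2 * (-(n₁:ℤ))) := by
        have hee : 2 * (-(((n₁ - 1 : ℕ)):ℤ)) + 2*(-1:ℤ) = 2 * (-(n₁:ℤ)) := by omega
        rw [hxdef, mul_assoc, ← zpow_add₀ hq0, hee]
      rw [he]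
      exact hn₁
    -- choose the maximal initial segment of M starting at x
    have hex2 : ∃ m : ℕ, x * q ^ (2 * ((m:ℤ))) ∉ M :=
      exists_not_mem hq0 hq hx0 (fun a b hab => by omega)
    set K := Nat.find hex2 with hKdef
    have hKout : x * q ^ (2 * ((K:ℤ))) ∉ M := Nat.find_spec hex2
    have hKmemZ : ∀ j, j < K → x * q ^ (2 * ((j:ℤ))) ∈ M := by
      intro j hj
      have h := Nat.find_min hex2 hj
      rw [not_not] at h
      exact h
    have hKpos : 0 < K := by
      rcases Nat.eq_zero_or_pos K with h0 | h0
      · exfalso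
        have := hKout
        rw [h0] at this
        simp at this
        exact this hxM
      · exact h0
    have hKmem : ∀ j, j < K → x * q ^ (2 * j) ∈ M := by
      intro j hj
      rw [npow_eq_zpow]
      exact hKmemZ j hj
    set seg := segMultiset q x K with hsegdef
    have hsegsub : ∀ z ∈ seg, z ∈ M := by
      intro z hz
      obtain ⟨j, hj, rfl⟩ := mem_segSet.mp (mem_segMultiset.mp hz)
      exact hKmem j hj
    have hsegle : seg ≤ M := seg_le_of_mem hq0 hq hx0 hsegsub
    set M' := M - seg with hM'def
    have hMeq : seg + M' = M := add_tsub_cancel_of_le hsegle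
    have hsegcard : seg.card = K := card_segMultiset x K
    have hM'card : M'.card ≤ n := by
      have := congrArg Multiset.card hMeq
      rw [Multiset.card_add, hsegcard] at this
      omega
    have hM'le : M' ≤ M := tsub_le_self
    have hM'0 : ∀ z ∈ M', z ≠ 0 := fun z hz => hM z (Multiset.mem_of_le hM'le hz)
    obtain ⟨S', ⟨hS'len, hS'sum, hS'gen⟩, hS'uniq⟩ := ih M' hM'card hM'0
    -- segments contained in M are in general position with (K, x)
    have hgenKx : ∀ k' a', 1 ≤ k' → a' ≠ 0 →
        (∀ z ∈ segSet q a' k', z ∈ M) → ¬ SpecialPos q (K, x) (k', a') := by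
      intro k' a' hk' ha' hs
      exact not_special hq0 hq hx0 ha' hKpos hk' hxleft hKout hs
    have hgen1 : ∀ p' ∈ S', ¬ SpecialPos q (K, x) p' := by
      rintro ⟨k', a'⟩ hp'
      have hlen := hS'len _ hp'
      apply hgenKx k' a' hlen.1 hlen.2
      intro z hz
      have h1 : z ∈ M' := by
        rw [hS'sum]
        exact mem_sum_map.mpr ⟨(k', a'), hp', mem_segMultiset.mpr hz⟩
      exact Multiset.mem_of_le hM'le h1
    refine ⟨(K, x) ::ₘ S', ⟨?_, ?_, ?_⟩, ?_⟩
    · rintro p hp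
      rcases Multiset.mem_cons.mp hp with rfl | hp'
      · exact ⟨hKpos, hx0⟩
      · exact hS'len p hp'
    · rw [Multiset.map_cons, Multiset.sum_cons, ← hS'sum]
      exact hMeq.symm
    · rintro p hp p' hp'
      rcases Multiset.mem_cons.mp hp with rfl | hp1 <;>
        rcases Multiset.mem_cons.mp hp' with rfl | hp2
      · rintro ⟨h1, -, -⟩; exact h1 subset_rfl
      · exact hgen1 p' hp2
      · exact fun h => hgen1 p hp1 (specialPos_symm h)
      · exact hS'gen p hp1 p' hp2
    -- uniqueness
    rintro T ⟨hTlen, hTsum, hTgen⟩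
    -- T contains a segment with origin x
    have hxM2 : x ∈ (T.map fun p => segMultiset q p.2 p.1).sum := by
      rw [← hTsum]; exact hxM
    obtain ⟨p0, hp0, hx2⟩ := mem_sum_map.mp hxM2
    obtain ⟨j, hj, hxe⟩ := mem_segSet.mp (mem_segMultiset.mp hx2)
    have hj0 : j = 0 := by
      by_contra hjne
      have hmem : p0.2 * q ^ (2*(j-1)) ∈ M := by
        rw [hTsum]
        exact mem_sum_map.mpr ⟨p0, hp0, mem_segMultiset.mpr ⟨j - 1, by omega, rfl⟩⟩
      have h2 : x * q ^ (2*(-1:ℤ)) = p0.2 * q ^ (2*(j-1)) := by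
        have hee : 2*(j:ℤ) + 2*(-1:ℤ) = 2 * (((j - 1 : ℕ)):ℤ) := by omega
        rw [hxe, npow_eq_zpow, npow_eq_zpow p0.2 (j-1), mul_assoc, ← zpow_add₀ hq0, hee]
      rw [← h2] at hmem
      exact hxleft hmem
    have hp0x : p0.2 = x := by
      rw [hj0] at hxe
      simp at hxe
      exact hxe.symm
    have hp0T : (p0.1, x) ∈ T := by rw [← hp0x]; exact hp0
    have hbnd : ∀ k, (k, x) ∈ T → k ≤ K := by
      intro k hk
      by_contra hlt
      push_neg at hlt
      apply hKout
      rw [hTsum]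
      exact mem_sum_map.mpr ⟨(k, x), hk, mem_segMultiset.mpr ⟨K, hlt, (npow_eq_zpow x K).symm⟩⟩
    set P : ℕ → Prop := fun k => (k, x) ∈ T with hPdef
    set k₁ := Nat.findGreatest P K with hk₁def
    have hk₁T : (k₁, x) ∈ T := by
      have h := Nat.findGreatest_spec (P := P) (hbnd p0.1 hp0T) (show P p0.1 from hp0T)
      rw [hk₁def]
      exact h
    have hk₁K : k₁ ≤ K := by
      rw [hk₁def]
      exact Nat.findGreatest_le K
    have hk₁pos : 1 ≤ k₁ := (hTlen _ hk₁T).1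
    have hk₁eq : k₁ = K := by
      by_contra hne
      have hlt : k₁ < K := lt_of_le_of_ne hk₁K hne
      have hmemk₁ : x * q ^ (2*k₁) ∈ (T.map fun p => segMultiset q p.2 p.1).sum := by
        rw [← hTsum]
        exact hKmem k₁ hlt
      obtain ⟨p', hp', hz⟩ := mem_sum_map.mp hmemk₁
      rcases p' with ⟨k', a'⟩
      obtain ⟨j', hj', he'⟩ := mem_segSet.mp (mem_segMultiset.mp hz)
      have hj2 : j' < k' := hj'
      have he2 : x * q ^ (2*k₁) = a' * q ^ (2*j') := he'
      have hlen' := hTlen _ hp'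
      have hk'1 : 1 ≤ k' := hlen'.1
      have ha'0 : a' ≠ 0 := hlen'.2
      set d : ℤ := (k₁:ℤ) - (j':ℤ) with hddef
      have ha' : a' = x * q ^ (2*d) := by
        have h1 : a' = a' * q ^ (2*j') * q ^ (2*(-(j':ℤ))) := by
          rw [npow_eq_zpow, mul_assoc, ← zpow_add₀ hq0]
          simp
        have hee : 2*(k₁:ℤ) + 2*(-(j':ℤ)) = 2*d := by omega
        rw [h1, ← he2, npow_eq_zpow, mul_assoc, ← zpow_add₀ hq0, hee]
      have hsubM : ∀ i : ℕ, i < k' → x * q ^ (2*(d + i)) ∈ M := by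
        intro i hi
        rw [hTsum]
        refine mem_sum_map.mpr ⟨(k', a'), hp', mem_segMultiset.mpr ⟨i, hi, ?_⟩⟩
        rw [ha', shift_eq hq0]
      have hd0 : 0 ≤ d := by
        by_contra hdneg
        push_neg at hdneg
        have h := hsubM (-1 - d).toNat (by omega)
        rw [show d + (((-1 - d).toNat : ℕ) : ℤ) = -1 by omega] at h
        exact hxleft h
      by_cases hd1 : d = 0
      · have ha'x : a' = x := by rw [ha', hd1]; simp
        have hk'T : (k', x) ∈ T := by rw [← ha'x]; exact hp'
        have hgt : k₁ < k' := by omega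
        have hng : ¬ P k' :=
          Nat.findGreatest_is_greatest (P := P) (n := K)
            (show Nat.findGreatest P K < k' by rw [← hk₁def]; exact hgt) (hbnd k' hk'T)
        exact hng hk'T
      · have hd1' : 1 ≤ d := by omega
        set dn := d.toNat with hdndef
        have hdnd : (dn : ℤ) = d := Int.toNat_of_nonneg hd0
        have hdn1 : 1 ≤ dn := by omega
        have hdnk : dn + j' = k₁ := by omega
        have ha'n : a' = x * q ^ (2*dn) := by
          rw [npow_eq_zpow x dn, hdnd, ← ha']
        apply hTgen (k₁, x) hk₁T (k', a') hp'
        refine ⟨?_, ?_, dn + k', x, by omega, hx0, ?_⟩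
        · intro hss
          have hx1 : x ∈ segSet q x k₁ := ⟨0, by omega, by simp⟩
          have h2 : x ∈ segSet q a' k' := hss hx1
          rw [ha'] at h2
          have := (mem_segSet_base hq0 hq hx0).mp h2
          omega
        · intro hss
          have hy1 : x * q ^ (2*(d + ((k' - 1 : ℕ) : ℤ))) ∈ segSet q (x * q ^ (2*d)) k' :=
            (mem_segSet_zpow hq0 hq hx0 d _ k').mpr ⟨by omega, by omega⟩
          rw [← ha'] at hy1
          have h2 : x * q ^ (2*(d + ((k' - 1 : ℕ) : ℤ))) ∈ segSet q x k₁ := hss hy1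
          have := (mem_segSet_zpow0 hq0 hq hx0 _ _).mp h2
          omega
        · show segSet q x k₁ ∪ segSet q a' k' = segSet q x (dn + k')
          ext z
          simp only [Set.mem_union]
          constructor
          · rintro (hy1 | hy1)
            · obtain ⟨i, hi, rfl⟩ := mem_segSet.mp hy1
              exact mem_segSet.mpr ⟨i, by omega, rfl⟩
            · obtain ⟨i, hi, rfl⟩ := mem_segSet.mp hy1
              rw [ha'n]
              refine mem_segSet.mpr ⟨dn + i, by omega, by ring⟩
          · intro hy1
            obtain ⟨i, hi, rfl⟩ := mem_segSet.mp hy1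
            by_cases hik : i < k₁
            · exact Or.inl (mem_segSet.mpr ⟨i, hik, rfl⟩)
            · refine Or.inr (mem_segSet.mpr ⟨i - dn, by omega, ?_⟩)
              rw [ha'n, show 2*i = 2*(dn + (i - dn)) by omega]
              ring
    have hKT : (K, x) ∈ T := by rw [← hk₁eq]; exact hk₁T
    have hTc : T = (K, x) ::ₘ T.erase (K, x) := (Multiset.cons_erase hKT).symm
    have hT₀sum : M' = ((T.erase (K, x)).map fun p => segMultiset q p.2 p.1).sum := by
      have h1 : (T.map fun p => segMultiset q p.2 p.1).sum =
          seg + ((T.erase (K, x)).map fun p => segMultiset q p.2 p.1).sum := by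
        conv_lhs => rw [hTc]
        rw [Multiset.map_cons, Multiset.sum_cons]
      exact add_left_cancel (hMeq.trans (hTsum.trans h1))
    have hT₀ : T.erase (K, x) = S' :=
      hS'uniq (T.erase (K, x))
        ⟨fun p hp => hTlen p (Multiset.mem_of_mem_erase hp), hT₀sum,
         fun p hp p' hp' => hTgen p (Multiset.mem_of_mem_erase hp) p' (Multiset.mem_of_mem_erase hp')⟩
    rw [hTc, hT₀]

end SegAux

/-- Every finite multiset of nonzero complex numbers can be written uniquely as
a union of `q`-segments which are pairwise in general position
(`q` not a root of unity). -/
theorem unique_segment_decomposition (q : ℂ) (hq0 : q ≠ 0)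
    (hq : ∀ m : ℕ, m ≠ 0 → q ^ m ≠ 1)
    (M : Multiset ℂ) (hM : ∀ x ∈ M, x ≠ 0) :
    ∃! S : Multiset (ℕ × ℂ),
      (∀ p ∈ S, 1 ≤ p.1 ∧ p.2 ≠ 0) ∧
      M = (S.map fun p => segMultiset q p.2 p.1).sum ∧
      (∀ p ∈ S, ∀ p' ∈ S, ¬ SpecialPos q p p') :=
  SegAux.main_aux q hq0 hq M.card M le_rfl hM
end

section
/- Let x_r (r ∈ ℤ) be commuting indeterminates satisfying the recursion w_{k,a}·w_{k, a+2} = w_{k+1,a}·w_{k−1, a+2} + 1 with w_{0,a} = 1 and w_{1,a} = x_a (indices a shifting by 2). Then w_{k,a} equals the k×k tridiagonal determinant with diagonal entries x_a, x_{a+2}, …, x_{a+2k−2} and all sub- and super-diagonal entries equal to 1. -/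
/-!
Expanding along the first row shows that the tridiagonal determinants `D_{k,a}` obey the
continuant recursion `D_{k+2,a} = x_a D_{k+1,a+2} - D_{k,a+4}`, and from it the identity
`D_{k+1,a} D_{k+1,a+2} = D_{k+2,a} D_{k,a+2} + 1` follows by induction on `k`; so the
determinants solve the `T`-system. A solution of the `T`-system is determined by its values
at `k = 0, 1` as long as one can divide by `D_{k,a}`, and `D_{k,a} ≠ 0` because specialising
every `x_r` to `2` turns it into `k + 1`.
-/

open MvPolynomial

/-- The `k × k` tridiagonal matrix with diagonal entries
`x_a, x_{a+2}, …, x_{a+2k-2}` and all sub- and super-diagonal entries `1`,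
over the polynomial ring `ℚ[x_r : r ∈ ℤ]`. -/
noncomputable def triMat (k : ℕ) (a : ℤ) :
    Matrix (Fin k) (Fin k) (MvPolynomial ℤ ℚ) := fun i j =>
  if (i : ℕ) = (j : ℕ) then X (a + 2 * ((i : ℕ) : ℤ))
  else if (i : ℕ) + 1 = (j : ℕ) ∨ (j : ℕ) + 1 = (i : ℕ) then 1 else 0

section Continuant

variable {R : Type*} [CommRing R]

def continuantMatrix (d : ℕ → R) (k : ℕ) : Matrix (Fin k) (Fin k) R := fun i j =>
  if (i : ℕ) = (j : ℕ) then d i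
  else if (i : ℕ) + 1 = (j : ℕ) ∨ (j : ℕ) + 1 = (i : ℕ) then 1 else 0

theorem det_continuantMatrix_zero (d : ℕ → R) : (continuantMatrix d 0).det = 1 :=
  Matrix.det_fin_zero

theorem det_continuantMatrix_one (d : ℕ → R) : (continuantMatrix d 1).det = d 0 := by
  simp [continuantMatrix]

theorem continuantMatrix_submatrix_succ (d : ℕ → R) (k : ℕ) :
    (continuantMatrix d (k + 1)).submatrix Fin.succ Fin.succ =
      continuantMatrix (fun i => d (i + 1)) k := by
  ext i j
  simp only [continuantMatrix, Matrix.submatrix_apply, Fin.val_succ]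
  grind

theorem det_continuantMatrix_submatrix_succ_succAbove_one (d : ℕ → R) (k : ℕ) :
    ((continuantMatrix d (k + 2)).submatrix Fin.succ (Fin.succAbove 1)).det =
      (continuantMatrix (fun i => d (i + 2)) k).det := by
  set M := (continuantMatrix d (k + 2)).submatrix Fin.succ (Fin.succAbove 1)
  have hcol : ∀ i : Fin k, M i.succ 0 = 0 := fun i => by
    simp [M, continuantMatrix, Fin.succAbove]
  have hminor : M.submatrix Fin.succ Fin.succ = continuantMatrix (fun i => d (i + 2)) k := by
    ext i j
    simp [M, continuantMatrix, Fin.succAbove]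
  rw [Matrix.det_succ_column_zero, Fin.sum_univ_succ,
    Finset.sum_eq_zero fun i _ => by rw [hcol, mul_zero, zero_mul]]
  simp [M, continuantMatrix, Fin.succAbove, hminor]

theorem det_continuantMatrix_add_two (d : ℕ → R) (k : ℕ) :
    (continuantMatrix d (k + 2)).det =
      d 0 * (continuantMatrix (fun i => d (i + 1)) (k + 1)).det -
        (continuantMatrix (fun i => d (i + 2)) k).det := by
  have hrow : ∀ j : Fin k, continuantMatrix d (k + 2) 0 j.succ.succ = 0 := fun j => by
    simp [continuantMatrix]
  rw [Matrix.det_succ_row_zero, Fin.sum_univ_succ, Fin.sum_univ_succ,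
    Finset.sum_eq_zero fun j _ => by rw [hrow, mul_zero, zero_mul], Fin.succAbove_zero,
    continuantMatrix_submatrix_succ, Fin.succ_zero_eq_one,
    det_continuantMatrix_submatrix_succ_succAbove_one]
  simp [continuantMatrix, sub_eq_add_neg]

theorem det_continuantMatrix_mul_shift (d : ℕ → R) (k : ℕ) :
    (continuantMatrix d (k + 1)).det * (continuantMatrix (fun i => d (i + 1)) (k + 1)).det =
      (continuantMatrix d (k + 2)).det * (continuantMatrix (fun i => d (i + 1)) k).det
        + 1 := by
  induction k generalizing d with
  | zero =>
    rw [det_continuantMatrix_add_two d 0]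
    simp only [Nat.reduceAdd, det_continuantMatrix_zero, det_continuantMatrix_one]
    ring
  | succ k ih =>
    have ih' := ih fun i => d (i + 1)
    simp only [add_assoc, Nat.reduceAdd] at ih'
    rw [det_continuantMatrix_add_two d k, det_continuantMatrix_add_two d (k + 1)]
    linear_combination ih'

theorem det_continuantMatrix_two [CharZero R] (k : ℕ) :
    (continuantMatrix (fun _ => (2 : R)) k).det = k + 1 := by
  induction k using Nat.strong_induction_on with
  | _ k ih =>
    match k with
    | 0 => rw [det_continuantMatrix_zero]; norm_num
    | 1 => rw [det_continuantMatrix_one]; norm_num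
    | k + 2 =>
      rw [det_continuantMatrix_add_two, ih (k + 1) (by omega), ih k (by omega)]
      push_cast
      ring

theorem RingHom.map_continuantMatrix {S : Type*} [CommRing S] (f : R →+* S) (d : ℕ → R)
    (k : ℕ) : f.mapMatrix (continuantMatrix d k) = continuantMatrix (f ∘ d) k := by
  ext i j
  simp only [RingHom.mapMatrix_apply, Matrix.map_apply, continuantMatrix]
  split_ifs <;> simp

end Continuant

-- The recursion with `k` shifted by one, so that no truncated `k - 1` occurs.
def IsTSystem {K : Type*} [CommRing K] (w : ℕ → ℤ → K) : Prop :=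
  ∀ k a, w (k + 1) a * w (k + 1) (a + 2) = w (k + 2) a * w k (a + 2) + 1

theorem IsTSystem.unique {K : Type*} [CommRing K] [IsDomain K] {w v : ℕ → ℤ → K}
    (hw : IsTSystem w) (hv : IsTSystem v) (hv_ne : ∀ k a, v k a ≠ 0)
    (h0 : ∀ a, w 0 a = v 0 a) (h1 : ∀ a, w 1 a = v 1 a) : w = v := by
  suffices h : ∀ k a, w k a = v k a ∧ w (k + 1) a = v (k + 1) a from
    funext fun k => funext fun a => (h k a).1
  intro k
  induction k with
  | zero => exact fun a => ⟨h0 a, h1 a⟩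
  | succ k ih =>
    refine fun a => ⟨(ih a).2, mul_right_cancel₀ (hv_ne k (a + 2)) ?_⟩
    have hwk := hw k a
    rw [(ih a).2, (ih (a + 2)).2, (ih (a + 2)).1] at hwk
    linear_combination hv k a - hwk

theorem triMat_eq_continuantMatrix (k : ℕ) (a : ℤ) :
    triMat k a = continuantMatrix (fun i => X (a + 2 * (i : ℤ))) k :=
  rfl

theorem det_triMat_mul_add_two (k : ℕ) (a : ℤ) :
    (triMat (k + 1) a).det * (triMat (k + 1) (a + 2)).det =
      (triMat (k + 2) a).det * (triMat k (a + 2)).det + 1 := by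
  have hshift : (fun i : ℕ => (X (a + 2 * ((i + 1 : ℕ) : ℤ)) : MvPolynomial ℤ ℚ)) =
      fun i : ℕ => X (a + 2 + 2 * (i : ℤ)) := by
    funext i
    push_cast
    ring_nf
  simpa only [triMat_eq_continuantMatrix, hshift] using
    det_continuantMatrix_mul_shift (fun i : ℕ => (X (a + 2 * (i : ℤ)) : MvPolynomial ℤ ℚ)) k

theorem det_triMat_ne_zero (k : ℕ) (a : ℤ) : (triMat k a).det ≠ 0 := by
  intro h
  have h2 := congrArg (aeval fun _ : ℤ => (2 : ℚ)).toRingHom h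
  rw [RingHom.map_det, triMat_eq_continuantMatrix, RingHom.map_continuantMatrix] at h2
  have hconst : (aeval fun _ : ℤ => (2 : ℚ)).toRingHom ∘
      (fun i : ℕ => (X (a + 2 * (i : ℤ)) : MvPolynomial ℤ ℚ)) =
      fun _ => 2 := by
    funext i
    simp
  rw [hconst, det_continuantMatrix_two, map_zero] at h2
  exact k.cast_add_one_ne_zero h2

theorem isTSystem_det_triMat (A : Type*) [CommRing A] [Algebra (MvPolynomial ℤ ℚ) A] :
    IsTSystem fun k a => algebraMap (MvPolynomial ℤ ℚ) A (triMat k a).det := fun k a => by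
  simpa only [map_mul, map_add, map_one] using
    congrArg (algebraMap (MvPolynomial ℤ ℚ) A) (det_triMat_mul_add_two k a)

/-- The `sl₂` `T`-system: if `w_{k,a}` (elements of `ℚ(x_r : r ∈ ℤ)`) satisfy
`w_{0,a} = 1`, `w_{1,a} = x_a` and
`w_{k,a} w_{k,a+2} = w_{k+1,a} w_{k-1,a+2} + 1` for `k ≥ 1`, then `w_{k,a}`
equals the `k × k` tridiagonal determinant with diagonal
`x_a, x_{a+2}, …, x_{a+2k-2}` and sub/super-diagonal entries `1`. -/
theorem tSystem_eq_tridiagonal_det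
    (w : ℕ → ℤ → FractionRing (MvPolynomial ℤ ℚ))
    (h0 : ∀ a : ℤ, w 0 a = 1)
    (h1 : ∀ a : ℤ, w 1 a = algebraMap (MvPolynomial ℤ ℚ) _ (X a))
    (hrec : ∀ (k : ℕ) (a : ℤ), 1 ≤ k →
      w k a * w k (a + 2) = w (k + 1) a * w (k - 1) (a + 2) + 1) :
    ∀ (k : ℕ) (a : ℤ),
      w k a = algebraMap (MvPolynomial ℤ ℚ) _ (triMat k a).det := by
  have hw : IsTSystem w := fun k a => by simpa using hrec (k + 1) a k.succ_pos
  have hdet := hw.unique (isTSystem_det_triMat _)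
    (fun k a => (map_ne_zero_iff _ (IsFractionRing.injective _ _)).2 (det_triMat_ne_zero k a))
    (fun a => by rw [h0, triMat_eq_continuantMatrix, det_continuantMatrix_zero, map_one])
    (fun a => by rw [h1, triMat_eq_continuantMatrix, det_continuantMatrix_one]; simp)
  exact fun k a => congrFun (congrFun hdet k) a
end

section
/- In type A_n, the map sending each almost positive root to its associated diagonal of the regular (n+3)-gon is a bijection between Φ_{≥−1} and the set of diagonals of the (n+3)-gon; in particular the number of diagonals of the (n+3)-gon is n(n+3)/2. -/
/-- Almost positive roots of type `A_n`: negatives of simple roots (`Sum.inl k`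
is `-α_{k+1}`) and positive roots given by intervals `[i,j]` (`Sum.inr`). -/
abbrev APRoot (n : ℕ) := Fin n ⊕ {ij : Fin n × Fin n // ij.1 ≤ ij.2}

/-- An ordered pair of vertices of the `(n+3)`-gon (vertices labelled
`0, …, n+2` counterclockwise) is a diagonal: the endpoints are distinct and
non-adjacent cyclically. -/
def IsDiag (n : ℕ) (p : Fin (n + 3) × Fin (n + 3)) : Prop :=
  p.1.val + 2 ≤ p.2.val ∧ p.2.val ≤ p.1.val + n + 1

/-- Two diagonals (written as increasing pairs) cross in the interior of the
polygon. -/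
def Crosses {N : ℕ} (p q : Fin N × Fin N) : Prop :=
  (p.1 < q.1 ∧ q.1 < p.2 ∧ p.2 < q.2) ∨ (q.1 < p.1 ∧ p.1 < q.2 ∧ q.2 < p.2)

/-- The snake diagonal associated with the negative simple root `-α_{k+1}`:
in 1-indexed terms, `-α_{2i-1} ↦ [i, n+3-i]` and `-α_{2i} ↦ [i+1, n+3-i]`. -/
def snake (n : ℕ) (k : Fin n) : Fin (n + 3) × Fin (n + 3) :=
  if k.val % 2 = 0 then
    (⟨k.val / 2, by have := k.isLt; omega⟩, ⟨n + 1 - k.val / 2, by omega⟩)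
  else
    (⟨(k.val + 1) / 2, by have := k.isLt; omega⟩, ⟨n + 2 - (k.val + 1) / 2, by omega⟩)

/-- `f` is the map sending each almost positive root to its associated
diagonal: it sends `-α_k` to the `k`-th snake diagonal, and the positive root
`α_{[i,j]}` to a diagonal crossing exactly the snake diagonals
`-α_i, …, -α_j`. -/
def DiagAssignment (n : ℕ) (f : APRoot n → Fin (n + 3) × Fin (n + 3)) : Prop :=
  (∀ x, IsDiag n (f x)) ∧
  (∀ k : Fin n, f (Sum.inl k) = snake n k) ∧
  (∀ ij : {ij : Fin n × Fin n // ij.1 ≤ ij.2}, ∀ k : Fin n,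
    Crosses (f (Sum.inr ij)) (snake n k) ↔ (ij.val.1 ≤ k ∧ k ≤ ij.val.2))

namespace APAux

lemma crosses_val {N : ℕ} (p q : Fin N × Fin N) :
    Crosses p q ↔ ((p.1.val < q.1.val ∧ q.1.val < p.2.val ∧ p.2.val < q.2.val) ∨
      (q.1.val < p.1.val ∧ p.1.val < q.2.val ∧ q.2.val < p.2.val)) := Iff.rfl

lemma snake_fst (n : ℕ) (k : Fin n) : (snake n k).1.val = (k.val + 1) / 2 := by
  unfold snake; split <;> simp <;> omega

lemma snake_snd (n : ℕ) (k : Fin n) : (snake n k).2.val = n + 1 - k.val / 2 := by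
  unfold snake; split <;> simp <;> omega

/-- Arithmetic form of crossing the `k`-th snake for a diagonal with
endpoints `a < b`. -/
def X (n a b k : ℕ) : Prop :=
  (a < (k + 1) / 2 ∧ (k + 1) / 2 < b ∧ b < n + 1 - k / 2) ∨
    ((k + 1) / 2 < a ∧ a < n + 1 - k / 2 ∧ n + 1 - k / 2 < b)

lemma crosses_snake_iff {n : ℕ} (p : Fin (n + 3) × Fin (n + 3)) (k : Fin n) :
    Crosses p (snake n k) ↔ X n p.1.val p.2.val k.val := by
  rw [crosses_val, snake_fst, snake_snd]; rfl

lemma snake_not_crosses {n : ℕ} (k k' : Fin n) : ¬ Crosses (snake n k) (snake n k') := by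
  rw [crosses_snake_iff, snake_fst, snake_snd]
  unfold X
  have := k.isLt; have := k'.isLt
  omega

def eJ (n j : ℕ) : ℕ := if j % 2 = 0 then j / 2 + 1 else n - j / 2

def dg (n i j : ℕ) : ℕ × ℕ :=
  if i % 2 = 1 then (i / 2, eJ n j) else (eJ n j, n + 2 - i / 2)

lemma dg_bounds {n i j : ℕ} (hij : i ≤ j) (hj : j < n) :
    (dg n i j).1 + 2 ≤ (dg n i j).2 ∧ (dg n i j).2 ≤ (dg n i j).1 + n + 1 ∧
      (dg n i j).2 < n + 3 := by
  unfold dg eJ; split_ifs <;> simp <;> omega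

lemma dg_X {n i j : ℕ} (hij : i ≤ j) (hj : j < n) (k : ℕ) (hk : k < n) :
    X n (dg n i j).1 (dg n i j).2 k ↔ (i ≤ k ∧ k ≤ j) := by
  unfold X dg eJ; split_ifs <;> simp <;> omega

/-- A diagonal crossing exactly the snakes `i, …, j` is forced to be `dg n i j`. -/
lemma pin {n i j a b : ℕ} (hij : i ≤ j) (hj : j < n)
    (hab : a + 2 ≤ b) (hb2 : b ≤ a + n + 1) (hb3 : b < n + 3)
    (Pi : X n a b i) (Pj : X n a b j)
    (Ni : i = 0 ∨ ¬ X n a b (i - 1)) (Nj : j + 1 = n ∨ ¬ X n a b (j + 1)) :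
    a = (dg n i j).1 ∧ b = (dg n i j).2 := by
  unfold X at Pi Pj Ni Nj
  rcases Pj with hA | hB
  · have hsum : 2 * a + 2 * b ≤ 2 * n := by omega
    have PiA : a < (i + 1) / 2 ∧ (i + 1) / 2 < b ∧ b < n + 1 - i / 2 := by
      rcases Pi with h | h
      · exact h
      · exfalso; omega
    have hi : i = 2 * a + 1 := by
      rcases Ni with h0 | h0
      · omega
      · omega
    have hb : 2 * b - 2 = j ∨ 2 * n + 1 - 2 * b = j := by
      rcases Nj with h0 | h0 <;> omega
    unfold dg eJ
    split_ifs <;> constructor <;> simp <;> omega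
  · have hsum : n + 3 ≤ a + b := by omega
    have PiB : (i + 1) / 2 < a ∧ a < n + 1 - i / 2 ∧ n + 1 - i / 2 < b := by
      rcases Pi with h | h
      · exfalso; omega
      · exact h
    have hi : i = 2 * n + 4 - 2 * b := by
      rcases Ni with h0 | h0
      · omega
      · omega
    have ha : 2 * a - 2 = j ∨ 2 * n + 1 - 2 * a = j := by
      rcases Nj with h0 | h0 <;> omega
    unfold dg eJ
    split_ifs <;> constructor <;> simp <;> omega

/-- Uniqueness of the diagonal crossing exactly the snakes `i, …, j`. -/
lemma det {n i j : ℕ} (hij : i ≤ j) (hj : j < n) {a b a' b' : ℕ}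
    (hab : a + 2 ≤ b ∧ b ≤ a + n + 1 ∧ b < n + 3)
    (hab' : a' + 2 ≤ b' ∧ b' ≤ a' + n + 1 ∧ b' < n + 3)
    (h : ∀ k, k < n → (X n a b k ↔ i ≤ k ∧ k ≤ j))
    (h' : ∀ k, k < n → (X n a' b' k ↔ i ≤ k ∧ k ≤ j)) :
    a = a' ∧ b = b' := by
  have facts : ∀ a₀ b₀ : ℕ, (∀ k, k < n → (X n a₀ b₀ k ↔ i ≤ k ∧ k ≤ j)) →
      X n a₀ b₀ i ∧ X n a₀ b₀ j ∧ (i = 0 ∨ ¬ X n a₀ b₀ (i - 1)) ∧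
      (j + 1 = n ∨ ¬ X n a₀ b₀ (j + 1)) := by
    intro a₀ b₀ hc
    refine ⟨(hc i (lt_of_le_of_lt hij hj)).2 ⟨le_rfl, hij⟩, (hc j hj).2 ⟨hij, le_rfl⟩, ?_, ?_⟩
    · rcases Nat.eq_zero_or_pos i with h0 | h0
      · exact Or.inl h0
      · exact Or.inr fun hx => by have := (hc (i - 1) (by omega)).1 hx; omega
    · rcases eq_or_lt_of_le (Nat.succ_le_of_lt hj) with h0 | h0
      · exact Or.inl h0
      · exact Or.inr fun hx => by have := (hc (j + 1) h0).1 hx; omega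
  obtain ⟨P1, P2, P3, P4⟩ := facts a b h
  obtain ⟨Q1, Q2, Q3, Q4⟩ := facts a' b' h'
  have e := pin hij hj hab.1 hab.2.1 hab.2.2 P1 P2 P3 P4
  have e' := pin hij hj hab'.1 hab'.2.1 hab'.2.2 Q1 Q2 Q3 Q4
  omega

lemma dg_eq_case1 {n a b : ℕ} (h1 : a + 2 ≤ b) (hs : a + b ≤ n) :
    dg n (2 * a + 1) (min (2 * b - 2) (2 * n + 1 - 2 * b)) = (a, b) := by
  unfold dg eJ
  split_ifs <;> (rw [Prod.mk.injEq]; constructor <;> omega)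

lemma dg_eq_case2 {n a b : ℕ} (h1 : a + 2 ≤ b) (hb2 : b ≤ a + n + 1) (hb3 : b < n + 3)
    (hs : n + 3 ≤ a + b) :
    dg n (2 * n + 4 - 2 * b) (min (2 * a - 2) (2 * n + 1 - 2 * a)) = (a, b) := by
  unfold dg eJ
  split_ifs <;> (rw [Prod.mk.injEq]; constructor <;> omega)

/-- The canonical assignment. -/
def f0 (n : ℕ) : APRoot n → Fin (n + 3) × Fin (n + 3) := fun x =>
  match x with
  | Sum.inl k => snake n k
  | Sum.inr ij =>
      (⟨(dg n ij.1.1.val ij.1.2.val).1, by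
          have := dg_bounds (n := n) (Fin.le_def.mp ij.2) ij.1.2.isLt; omega⟩,
       ⟨(dg n ij.1.1.val ij.1.2.val).2, by
          have := dg_bounds (n := n) (Fin.le_def.mp ij.2) ij.1.2.isLt; omega⟩)

lemma f0_inl (n : ℕ) (k : Fin n) : f0 n (Sum.inl k) = snake n k := rfl

lemma f0_inr_fst (n : ℕ) (ij : {ij : Fin n × Fin n // ij.1 ≤ ij.2}) :
    (f0 n (Sum.inr ij)).1.val = (dg n ij.1.1.val ij.1.2.val).1 := rfl

lemma f0_inr_snd (n : ℕ) (ij : {ij : Fin n × Fin n // ij.1 ≤ ij.2}) :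
    (f0 n (Sum.inr ij)).2.val = (dg n ij.1.1.val ij.1.2.val).2 := rfl

lemma snake_isDiag (n : ℕ) (k : Fin n) : IsDiag n (snake n k) := by
  constructor <;> rw [snake_fst, snake_snd] <;> (have := k.isLt; omega)

lemma f0_isDiag (n : ℕ) : ∀ x, IsDiag n (f0 n x) := by
  rintro (k | ij)
  · exact snake_isDiag n k
  · have h := dg_bounds (n := n) (Fin.le_def.mp ij.2) ij.1.2.isLt
    have e1 := f0_inr_fst n ij
    have e2 := f0_inr_snd n ij
    exact ⟨by omega, by omega⟩

lemma f0_assign (n : ℕ) : DiagAssignment n (f0 n) := by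
  refine ⟨f0_isDiag n, fun k => rfl, fun ij k => ?_⟩
  rw [crosses_snake_iff, f0_inr_fst, f0_inr_snd,
    dg_X (Fin.le_def.mp ij.2) ij.1.2.isLt k.val k.isLt, Fin.le_def, Fin.le_def]

lemma assign_unique (n : ℕ) (f : APRoot n → Fin (n + 3) × Fin (n + 3))
    (hf : DiagAssignment n f) : f = f0 n := by
  funext x
  rcases x with k | ij
  · rw [hf.2.1 k, f0_inl]
  · have hD := hf.1 (Sum.inr ij)
    have hD' := f0_isDiag n (Sum.inr ij)
    have hle : ij.1.1.val ≤ ij.1.2.val := Fin.le_def.mp ij.2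
    have hC : ∀ k, k < n → (X n (f (Sum.inr ij)).1.val (f (Sum.inr ij)).2.val k ↔
        ij.1.1.val ≤ k ∧ k ≤ ij.1.2.val) := by
      intro k hk
      rw [← crosses_snake_iff _ ⟨k, hk⟩, hf.2.2 ij ⟨k, hk⟩, Fin.le_def, Fin.le_def]
    have hC' : ∀ k, k < n → (X n (f0 n (Sum.inr ij)).1.val (f0 n (Sum.inr ij)).2.val k ↔
        ij.1.1.val ≤ k ∧ k ≤ ij.1.2.val) := by
      intro k hk
      rw [← crosses_snake_iff _ ⟨k, hk⟩, (f0_assign n).2.2 ij ⟨k, hk⟩, Fin.le_def, Fin.le_def]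
    have key := det hle ij.1.2.isLt
      ⟨hD.1, hD.2, (f (Sum.inr ij)).2.isLt⟩ ⟨hD'.1, hD'.2, (f0 n (Sum.inr ij)).2.isLt⟩ hC hC'
    exact Prod.ext_iff.mpr ⟨Fin.ext key.1, Fin.ext key.2⟩

lemma f0_bijOn (n : ℕ) : Set.BijOn (f0 n) Set.univ {p | IsDiag n p} := by
  refine ⟨fun x _ => f0_isDiag n x, ?_, ?_⟩
  · rintro (k | ij) - (k' | ij') - h
    · have h1 : (snake n k).1.val = (snake n k').1.val := congrArg (fun p => p.1.val) h
      have h2 : (snake n k).2.val = (snake n k').2.val := congrArg (fun p => p.2.val) h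
      rw [snake_fst, snake_fst] at h1
      rw [snake_snd, snake_snd] at h2
      have := k.isLt; have := k'.isLt
      exact congrArg Sum.inl (Fin.ext (by omega))
    · exfalso
      have hc := ((f0_assign n).2.2 ij' ij'.1.1).2 ⟨le_rfl, ij'.2⟩
      rw [← h, f0_inl] at hc
      exact snake_not_crosses k ij'.1.1 hc
    · exfalso
      have hc := ((f0_assign n).2.2 ij ij.1.1).2 ⟨le_rfl, ij.2⟩
      rw [h, f0_inl] at hc
      exact snake_not_crosses k' ij.1.1 hc
    · have hiff : ∀ k : Fin n, (ij.1.1 ≤ k ∧ k ≤ ij.1.2) ↔ (ij'.1.1 ≤ k ∧ k ≤ ij'.1.2) := by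
        intro k
        rw [← (f0_assign n).2.2 ij k, ← (f0_assign n).2.2 ij' k, h]
      have e1 := (hiff ij.1.1).1 ⟨le_rfl, ij.2⟩
      have e2 := (hiff ij'.1.1).2 ⟨le_rfl, ij'.2⟩
      have e3 := (hiff ij.1.2).1 ⟨ij.2, le_rfl⟩
      have e4 := (hiff ij'.1.2).2 ⟨ij'.2, le_rfl⟩
      have : ij.1 = ij'.1 :=
        Prod.ext_iff.mpr ⟨le_antisymm e2.1 e1.1, le_antisymm e3.2 e4.2⟩
      exact congrArg Sum.inr (Subtype.ext this)
  · rintro ⟨⟨a, ha⟩, ⟨b, hb⟩⟩ hp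
    obtain ⟨h1, h2⟩ := hp
    simp only at h1 h2
    rcases le_or_gt (a + b) n with hs | hs
    · refine ⟨Sum.inr ⟨(⟨2 * a + 1, by omega⟩, ⟨min (2 * b - 2) (2 * n + 1 - 2 * b), by omega⟩),
        Fin.mk_le_mk.mpr (by omega)⟩, Set.mem_univ _, ?_⟩
      refine Prod.ext_iff.mpr ⟨Fin.ext ?_, Fin.ext ?_⟩
      · show (dg n (2 * a + 1) (min (2 * b - 2) (2 * n + 1 - 2 * b))).1 = a
        rw [dg_eq_case1 h1 hs]
      · show (dg n (2 * a + 1) (min (2 * b - 2) (2 * n + 1 - 2 * b))).2 = b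
        rw [dg_eq_case1 h1 hs]
    · rcases le_or_gt (a + b) (n + 2) with hs2 | hs2
      · refine ⟨Sum.inl ⟨n + 1 + a - b, by omega⟩, Set.mem_univ _, ?_⟩
        rw [f0_inl]
        refine Prod.ext_iff.mpr ⟨Fin.ext ?_, Fin.ext ?_⟩
        · rw [snake_fst]; simp; omega
        · rw [snake_snd]; simp; omega
      · refine ⟨Sum.inr ⟨(⟨2 * n + 4 - 2 * b, by omega⟩, ⟨min (2 * a - 2) (2 * n + 1 - 2 * a),
          by omega⟩), Fin.mk_le_mk.mpr (by omega)⟩, Set.mem_univ _, ?_⟩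
        refine Prod.ext_iff.mpr ⟨Fin.ext ?_, Fin.ext ?_⟩
        · show (dg n (2 * n + 4 - 2 * b) (min (2 * a - 2) (2 * n + 1 - 2 * a))).1 = a
          rw [dg_eq_case2 h1 h2 hb (by omega)]
        · show (dg n (2 * n + 4 - 2 * b) (min (2 * a - 2) (2 * n + 1 - 2 * a))).2 = b
          rw [dg_eq_case2 h1 h2 hb (by omega)]

lemma card_aux (n : ℕ) :
    Set.ncard {p : Fin (n + 3) × Fin (n + 3) | IsDiag n p} = n * (n + 3) / 2 := by
  have hb := f0_bijOn n
  rw [← hb.image_eq, Set.ncard_image_of_injOn hb.injOn, Set.ncard_univ,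
    Nat.card_eq_fintype_card]
  have hsub : Fintype.card {ij : Fin n × Fin n // ij.1 ≤ ij.2} = (n + 1) * n / 2 := by
    rw [← Fintype.card_congr (Sym2.sortEquiv (α := Fin n)), Sym2.card]
    simp [Nat.choose_two_right]
  rw [Fintype.card_sum, Fintype.card_fin, hsub]
  have h1 : n * (n + 3) = (n + 1) * n + 2 * n := by ring
  omega

end APAux

/-- In type `A_n`, the map sending each almost positive root to its associated
diagonal of the `(n+3)`-gon exists, is unique, and is a bijection onto the set
of diagonals; in particular the number of diagonals is `n(n+3)/2`. -/
theorem apRoots_diagonals_bijection (n : ℕ) :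
    (∃! f : APRoot n → Fin (n + 3) × Fin (n + 3), DiagAssignment n f) ∧
    (∀ f : APRoot n → Fin (n + 3) × Fin (n + 3), DiagAssignment n f →
      Set.BijOn f Set.univ {p | IsDiag n p}) ∧
    Set.ncard {p : Fin (n + 3) × Fin (n + 3) | IsDiag n p} = n * (n + 3) / 2 := by
  refine ⟨⟨APAux.f0 n, APAux.f0_assign n, APAux.assign_unique n⟩, ?_, APAux.card_aux n⟩
  intro f hf
  rw [APAux.assign_unique n f hf]
  exact APAux.f0_bijOn n
end

section
/- In type A_n, for a positive root α equal to a sum of distinct simple roots over an interval J (so α is multiplicity-free), the F-polynomial is F_α(v_1,…,v_n) = Σ_γ ∏_i v_i^{c_i}, where the sum is over vectors γ = Σ_i c_i α_i with 0 ≤ c_i ≤ a_i for all i, and for each i ∈ I_1, c_i ≤ min{c_j : j ∈ supp(α), j adjacent to i}. In particular, each coefficient is 0 or 1. -/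
open MvPolynomial

/-- Adjacency in the type `A_n` Dynkin diagram. -/
def Adj {n : ℕ} (i j : Fin n) : Prop := i.val + 1 = j.val ∨ j.val + 1 = i.val

/-- Condition (iii) of Fomin-Zelevinsky: there is a simple path
`(i_0, …, i_m)` of length `m ≥ 1` contained in the support of `α = Σ a_i α_i`
with `a_{i_0} = a_{i_m} = 1` and `c_{i_k} = 1` for `i_k ∈ I_1`,
`c_{i_k} = a_{i_k} - 1` for `i_k ∈ I_0` (here `ξ i = true` means `i ∈ I₁`). -/
def PathObstruction {n : ℕ} (ξ : Fin n → Bool) (a c : Fin n → ℕ) : Prop :=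
  ∃ (m : ℕ) (p : Fin (m + 1) → Fin n), 1 ≤ m ∧ Function.Injective p ∧
    (∀ k : Fin m, Adj (p k.castSucc) (p k.succ)) ∧
    (∀ k, a (p k) ≠ 0) ∧ a (p 0) = 1 ∧ a (p (Fin.last m)) = 1 ∧
    (∀ k, (c (p k) : ℤ) = if ξ (p k) then 1 else (a (p k) : ℤ) - 1)

/-- `γ = Σ c_i α_i` is `α`-acceptable for `α = Σ a_i α_i`:
(i) `0 ≤ c_i ≤ a_i`; (ii) if `i ∈ I_1` and `j ∈ I_0` are adjacent then
`c_i ≤ (2 - a_j) + c_j`; (iii) no path obstruction. -/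
def Acceptable {n : ℕ} (ξ : Fin n → Bool) (a c : Fin n → ℕ) : Prop :=
  (∀ i, c i ≤ a i) ∧
  (∀ i j, Adj i j → ξ i = true → ξ j = false → (c i : ℤ) ≤ (2 - (a j : ℤ)) + c j) ∧
  ¬ PathObstruction ξ a c

/-- The set whose components are counted in `e(γ, α)`:
`{i | c_i = 1 if i ∈ I_1 and c_i = a_i - 1 if i ∈ I_0}`. -/
def CompSet {n : ℕ} (ξ : Fin n → Bool) (a c : Fin n → ℕ) : Set (Fin n) :=
  {i | if ξ i then c i = 1 else (c i : ℤ) = (a i : ℤ) - 1}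

/-- `e(γ, α)`: the number of connected components of `CompSet ξ a c` (in the
path graph `A_n`) that are contained in `{i | a_i = 2}`, counted via left
endpoints of components. -/
noncomputable def eCount {n : ℕ} (ξ : Fin n → Bool) (a c : Fin n → ℕ) : ℕ :=
  Set.ncard {i : Fin n | i ∈ CompSet ξ a c ∧
    (∀ j : Fin n, j.val + 1 = i.val → j ∉ CompSet ξ a c) ∧
    (∀ j : Fin n, i ≤ j → (∀ k, i ≤ k → k ≤ j → k ∈ CompSet ξ a c) → a j = 2)}

open Classical in
/-- The Fomin-Zelevinsky combinatorial formula for the `F`-polynomial of a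
`2`-restricted positive root `α = Σ a_i α_i`:
`F_α = Σ_γ 2^{e(γ,α)} v^γ` over `α`-acceptable `γ` (for multiplicity-free `α`
all exponents lie in `{0,1}`, so the sum ranges over `g : Fin n → Fin 2`). -/
noncomputable def Fgen {n : ℕ} (ξ : Fin n → Bool) (a : Fin n → ℕ) :
    MvPolynomial (Fin n) ℤ :=
  ∑ g : Fin n → Fin 2,
    if Acceptable ξ a (fun i => (g i).val) then
      C ((2 : ℤ) ^ eCount ξ a (fun i => (g i).val)) * ∏ i, X i ^ (g i).val
    else 0

open Classical in
/-- The simplified formula for multiplicity-free roots: the sum of `v^γ` over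
`γ` with `0 ≤ c_i ≤ a_i` for all `i`, and
`c_i ≤ min{c_j : j ∈ supp α, j adjacent to i}` for every `i ∈ I_1`. -/
noncomputable def Fsimp {n : ℕ} (ξ : Fin n → Bool) (a : Fin n → ℕ) :
    MvPolynomial (Fin n) ℤ :=
  ∑ g : Fin n → Fin 2,
    if (∀ i, (g i).val ≤ a i) ∧
        (∀ i, ξ i = true → ∀ j, Adj i j → a j = 1 → (g i).val ≤ (g j).val) then
      ∏ i, X i ^ (g i).val
    else 0

lemma prod_univ_X_pow {n : ℕ} (d : Fin n → ℕ) :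
    (∏ i, (X i : MvPolynomial (Fin n) ℤ) ^ d i)
      = monomial (Finsupp.equivFunOnFinite.symm d) 1 := by
  set s : Fin n →₀ ℕ := Finsupp.equivFunOnFinite.symm d with hs
  have hsd : ∀ i, s i = d i := fun i => rfl
  rw [← prod_X_pow_eq_monomial]
  refine (Finset.prod_subset (Finset.subset_univ _) ?_).symm
  intro x _ hx
  rw [← hsd x, Finsupp.notMem_support_iff.mp hx, pow_zero]

lemma adj_symm {n : ℕ} {i j : Fin n} (h : Adj i j) : Adj j i := h.symm

lemma adj_ne {n : ℕ} {i j : Fin n} (h : Adj i j) : i ≠ j := by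
  rcases h with h | h <;> (intro he; subst he; omega)

lemma acceptable_iff {n : ℕ} (ξ : Fin n → Bool)
    (hbip : ∀ i j : Fin n, Adj i j → ξ i ≠ ξ j)
    (a c : Fin n → ℕ) (ha : ∀ i, a i ≤ 1) (hc : ∀ i, c i ≤ 1) :
    Acceptable ξ a c ↔
      (∀ i, c i ≤ a i) ∧
        (∀ i, ξ i = true → ∀ j, Adj i j → a j = 1 → c i ≤ c j) := by
  constructor
  · rintro ⟨h1, _, h3⟩
    refine ⟨h1, ?_⟩
    intro i hi j hadj haj
    by_contra hlt
    push_neg at hlt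
    have hci : c i = 1 := by have := hc i; omega
    have hcj : c j = 0 := by omega
    have hne : i ≠ j := adj_ne hadj
    have hai : a i = 1 := by have := h1 i; have := ha i; omega
    have hj : ξ j = false := by
      have h := hbip i j hadj; revert h; cases hξj : ξ j <;> simp [hi]
    refine h3 ⟨1, ![i, j], le_refl 1, ?_, ?_, ?_, ?_, ?_, ?_⟩
    · intro x y hxy
      fin_cases x <;> fin_cases y <;> simp_all
    · intro k; fin_cases k; simpa using hadj
    · intro k; fin_cases k <;> simp [hai, haj]
    · simp [hai]
    · simp [Fin.last, haj]
    · intro k; fin_cases k <;> simp [hi, hj, hci, hcj, haj]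
  · rintro ⟨h1, h2⟩
    refine ⟨h1, ?_, ?_⟩
    · intro i j _ _ _
      have := h1 i; have := ha i; have := ha j; omega
    · rintro ⟨m, p, hm, hinj, hadj, hne, h0, hl, hcv⟩
      set k0 : Fin m := ⟨0, hm⟩ with hk0
      have hA : Adj (p k0.castSucc) (p k0.succ) := hadj k0
      set u := p k0.castSucc with hu
      set v := p k0.succ with hv
      have hau : a u = 1 := by
        have h1 := hne k0.castSucc; rw [← hu] at h1; have := ha u; omega
      have hav : a v = 1 := by
        have h1 := hne k0.succ; rw [← hv] at h1; have := ha v; omega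
      have hcu := hcv k0.castSucc
      have hcvv := hcv k0.succ
      rw [← hu, hau] at hcu
      rw [← hv, hav] at hcvv
      have hξ := hbip u v hA
      cases hξu : ξ u
      · have hξv : ξ v = true := by revert hξ; cases ξ v <;> simp [hξu]
        rw [hξu] at hcu; rw [hξv] at hcvv
        simp at hcu hcvv
        have := h2 v hξv u (adj_symm hA) hau
        omega
      · have hξv : ξ v = false := by revert hξ; cases ξ v <;> simp [hξu]
        rw [hξu] at hcu; rw [hξv] at hcvv
        simp at hcu hcvv
        have := h2 u hξu v hA hav
        omega

lemma eCount_eq_zero {n : ℕ} (ξ : Fin n → Bool) (a c : Fin n → ℕ)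
    (ha : ∀ i, a i ≤ 1) : eCount ξ a c = 0 := by
  unfold eCount
  convert Set.ncard_empty (Fin n)
  ext i
  simp only [Set.mem_setOf_eq, Set.mem_empty_iff_false, iff_false]
  rintro ⟨h1, -, h3⟩
  have h2 := h3 i le_rfl (fun k hk1 hk2 => by
    have hki : k = i := le_antisymm hk2 hk1
    rw [hki]; exact h1)
  have := ha i; omega

/-- In type `A_n`, for a multiplicity-free positive root `α` supported on an
interval `J`, the `F`-polynomial (Fomin-Zelevinsky formula) equals the
simplified sum of monomials; in particular every coefficient is `0` or `1`. -/
theorem Fpolynomial_multiplicityFree (n : ℕ) (ξ : Fin n → Bool)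
    (hbip : ∀ i j : Fin n, Adj i j → ξ i ≠ ξ j)
    (a : Fin n → ℕ) (lo hi : Fin n) (hlohi : lo ≤ hi)
    (hsupp : ∀ i, a i = if lo ≤ i ∧ i ≤ hi then 1 else 0) :
    Fgen ξ a = Fsimp ξ a ∧
    ∀ m : Fin n →₀ ℕ, coeff m (Fgen ξ a) = 0 ∨ coeff m (Fgen ξ a) = 1 := by
  classical
  have ha : ∀ i, a i ≤ 1 := by intro i; rw [hsupp i]; split <;> omega
  have key : Fgen ξ a = Fsimp ξ a := by
    unfold Fgen Fsimp
    refine Finset.sum_congr rfl fun g _ => ?_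
    have hc : ∀ i, (g i).val ≤ 1 := fun i => Nat.lt_succ_iff.mp (g i).isLt
    have hiff := acceptable_iff ξ hbip a (fun i => (g i).val) ha hc
    simp only [hiff, eCount_eq_zero ξ a _ ha, pow_zero, map_one, one_mul]
  refine ⟨key, fun m => ?_⟩
  rw [key]
  unfold Fsimp
  rw [coeff_sum]
  simp only [apply_ite (coeff m), coeff_zero, prod_univ_X_pow, coeff_monomial,
    ← ite_and]
  rw [Finset.sum_boole]
  have hcard : (Finset.univ.filter (fun g : Fin n → Fin 2 =>
      ((∀ i, (g i).val ≤ a i) ∧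
        (∀ i, ξ i = true → ∀ j, Adj i j → a j = 1 → (g i).val ≤ (g j).val)) ∧
      Finsupp.equivFunOnFinite.symm (fun i => (g i).val) = m)).card ≤ 1 := by
    refine Finset.card_le_one.mpr fun g1 h1 g2 h2 => ?_
    rw [Finset.mem_filter] at h1 h2
    have he : (Finsupp.equivFunOnFinite.symm (fun i => (g1 i).val))
        = Finsupp.equivFunOnFinite.symm (fun i => (g2 i).val) :=
      h1.2.2.trans h2.2.2.symm
    have hf := Finsupp.equivFunOnFinite.symm.injective he
    funext i
    exact Fin.val_injective (congrFun hf i)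
  rcases Nat.le_one_iff_eq_zero_or_eq_one.mp hcard with h | h
  · left; rw [h]; norm_num
  · right; rw [h]; norm_num
end

section
/- The piecewise-linear involutions τ_+ and τ_− preserve the set Φ_{≥−1} of almost positive roots: if α ∈ Φ_{≥−1} then τ_ε(α) ∈ Φ_{≥−1} for ε = ±1. Moreover τ_−(−α_i) = −ε_i α_i for every simple root α_i. -/
/-- The Cartan matrix of type `A_n`. -/
def cartanA (n : ℕ) : Fin n → Fin n → ℤ := fun i j =>
  if i = j then 2 else if i.val + 1 = j.val ∨ j.val + 1 = i.val then -1 else 0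

/-- The bipartition of the type `A_n` Dynkin diagram: `ξ i = true` iff
`i ∈ I_1` (odd vertices, 0-indexed). -/
def xiA (n : ℕ) : Fin n → Bool := fun i => i.val % 2 = 1

/-- The piecewise-linear map `τ_ε` of the root lattice: `σ = true`
corresponds to `τ_-` (it modifies the coordinates `i` with `ε_i = -1`,
i.e. `ξ_i = true`), `σ = false` to `τ_+`. -/
def tauMap {n : ℕ} (A : Fin n → Fin n → ℤ) (ξ : Fin n → Bool) (σ : Bool)
    (γ : Fin n → ℤ) : Fin n → ℤ := fun i =>
  if ξ i = σ then
    -γ i - ∑ j ∈ Finset.univ.filter (fun j => j ≠ i), A i j * max 0 (γ j)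
  else γ i

/-- The positive root `α_i + ⋯ + α_j` of type `A_n`. -/
def intervalRoot (n : ℕ) (i j : Fin n) : Fin n → ℤ := fun k =>
  if i ≤ k ∧ k ≤ j then 1 else 0

/-- The negative simple root `-α_i` of type `A_n`. -/
def negSimpleRoot (n : ℕ) (i : Fin n) : Fin n → ℤ := fun k =>
  if k = i then -1 else 0

/-- The set `Φ_{≥-1}` of almost positive roots of type `A_n`. -/
def almostPositiveRoots (n : ℕ) : Set (Fin n → ℤ) :=
  {v | (∃ i j : Fin n, i ≤ j ∧ v = intervalRoot n i j) ∨ ∃ i : Fin n, v = negSimpleRoot n i}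

/-- The sign `ε_i = (-1)^{ξ_i}`. -/
def epsA (n : ℕ) (i : Fin n) : ℤ := if xiA n i then -1 else 1

/-!
On a nonnegative vector `τ_ε` is the linear map `γ ↦ γ - Σ_{ε_k = ε} ⟨α_k^∨, γ⟩ α_k`, and on a
nonpositive one it just negates the coordinates with `ε_k = ε`; so `τ_ε` swaps `-α_i` and `α_i`
when `ε_i = ε` and fixes `-α_i` otherwise. For an interval root `α_i + ⋯ + α_j` a coordinate `k`
with `ε_k = ε` becomes `-[k ∈ [i, j]] + #(neighbours of k in [i, j])`. As the signs alternate
along the path, an endpoint of sign `ε` moves one step inwards and an endpoint of sign `-ε` one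
step outwards (if the diagram extends that far); the only root that leaves the positive ones is
`α_i` with `ε_i = ε`, which goes to `-α_i`.
-/

open Finset

section

variable {n : ℕ}

lemma tauMap_of_nonneg (A : Fin n → Fin n → ℤ) (ξ : Fin n → Bool) (σ : Bool)
    {v : Fin n → ℤ} (hv : 0 ≤ v) (k : Fin n) :
    tauMap A ξ σ v k =
      if ξ k = σ then -v k - ∑ j ∈ univ.filter (· ≠ k), A k j * v j else v k := by
  have hmax : ∀ j, max 0 (v j) = v j := fun j => max_eq_right (hv j)
  simp only [tauMap, hmax]

lemma tauMap_of_nonpos (A : Fin n → Fin n → ℤ) (ξ : Fin n → Bool) (σ : Bool)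
    {v : Fin n → ℤ} (hv : v ≤ 0) (k : Fin n) :
    tauMap A ξ σ v k = if ξ k = σ then -v k else v k := by
  have hmax : ∀ j, max 0 (v j) = 0 := fun j => max_eq_left (hv j)
  simp only [tauMap, hmax, mul_zero, sum_const_zero, sub_zero]

lemma sum_ne_cartanA_mul (g : ℕ → ℤ) (k : Fin n) :
    ∑ j ∈ univ.filter (· ≠ k), cartanA n k j * g j =
      -((if 0 < k.val then g (k - 1) else 0) + if k + 1 < n then g (k + 1) else 0) := by
  have hterm : ∀ j : Fin n, (if j ≠ k then cartanA n k j * g j else 0) =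
      -((if 0 < k.val then (if j.val = k - 1 then g j else 0) else 0) +
        if j.val = k + 1 then g j else 0) := by
    intro j
    simp only [cartanA, ne_eq, Fin.ext_iff]
    split_ifs <;> omega
  rw [sum_filter, sum_congr rfl fun j _ => hterm j, sum_neg_distrib, sum_add_distrib,
    Fin.sum_univ_eq_sum_range (fun m => if 0 < k.val then (if m = k - 1 then g m else 0) else 0),
    Fin.sum_univ_eq_sum_range (fun m => if m = k + 1 then g m else 0), sum_ite_irrel,
    sum_const_zero, sum_ite_eq', sum_ite_eq']
  simp only [mem_range]
  split_ifs <;> omega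

lemma xiA_eq_iff (k : Fin n) (σ : Bool) : xiA n k = σ ↔ k.val % 2 = σ.toNat := by
  cases σ <;> simp [xiA]

lemma intervalRoot_self (i : Fin n) : intervalRoot n i i = fun k => if k = i then 1 else 0 := by
  funext k
  simp only [intervalRoot, ← le_antisymm_iff, eq_comm]

lemma tauMap_intervalRoot_apply (σ : Bool) (i j k : Fin n) :
    tauMap (cartanA n) (xiA n) σ (intervalRoot n i j) k =
      if k.val % 2 = σ.toNat then
        -intervalRoot n i j k + (if 0 < k.val ∧ i.val ≤ k - 1 ∧ k - 1 ≤ j.val then 1 else 0)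
          + (if i.val ≤ k + 1 ∧ k + 1 ≤ j.val then 1 else 0)
      else intervalRoot n i j k := by
  have hnonneg : 0 ≤ intervalRoot n i j := fun k => by
    simp only [intervalRoot, Pi.zero_apply]
    split_ifs <;> norm_num
  rw [tauMap_of_nonneg _ _ _ hnonneg]
  simp only [intervalRoot, xiA_eq_iff, Fin.le_def]
  rw [sum_ne_cartanA_mul (fun m => if i.val ≤ m ∧ m ≤ j.val then 1 else 0)]
  have := j.isLt
  split_ifs <;> omega

lemma tauMap_intervalRoot_mem (σ : Bool) {i j : Fin n} (hij : i ≤ j) :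
    tauMap (cartanA n) (xiA n) σ (intervalRoot n i j) ∈ almostPositiveRoots n := by
  have hσ := σ.toNat_le
  have hi := i.isLt
  have hj := j.isLt
  rw [Fin.le_def] at hij
  by_cases hsimple : i = j ∧ xiA n i = σ
  · obtain ⟨rfl, hflip⟩ := hsimple
    rw [xiA_eq_iff] at hflip
    refine Or.inr ⟨i, funext fun k => ?_⟩
    rw [tauMap_intervalRoot_apply]
    simp only [intervalRoot, negSimpleRoot, Fin.le_def, Fin.ext_iff]
    split_ifs <;> omega
  · simp only [not_and, xiA_eq_iff, Fin.ext_iff] at hsimple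
    refine Or.inl ⟨⟨if i.val % 2 = σ.toNat then i + 1 else i - 1, by split_ifs <;> omega⟩,
      ⟨if j.val % 2 = σ.toNat then j - 1 else min (j + 1) (n - 1), by split_ifs <;> omega⟩,
      ?_, funext fun k => ?_⟩
    · rw [Fin.mk_le_mk]
      split_ifs <;> omega
    · rw [tauMap_intervalRoot_apply]
      simp only [intervalRoot, Fin.le_def]
      split_ifs <;> omega

lemma tauMap_negSimpleRoot (A : Fin n → Fin n → ℤ) (ξ : Fin n → Bool) (σ : Bool) (i : Fin n) :
    tauMap A ξ σ (negSimpleRoot n i) =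
      if ξ i = σ then intervalRoot n i i else negSimpleRoot n i := by
  have hnonpos : negSimpleRoot n i ≤ 0 := fun k => by
    simp only [negSimpleRoot, Pi.zero_apply]
    split_ifs <;> norm_num
  funext k
  rw [tauMap_of_nonpos A ξ σ hnonpos, intervalRoot_self]
  by_cases hk : k = i
  · subst hk
    split_ifs <;> simp [negSimpleRoot]
  · split_ifs <;> simp [negSimpleRoot, hk]

end

/-- `τ_+` and `τ_-` preserve the set of almost positive roots, and
`τ_-(-α_i) = -ε_i α_i` for every simple root `α_i` (type `A_n`). -/
theorem tau_preserves_almostPositiveRoots (n : ℕ) :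
    (∀ σ : Bool, ∀ v ∈ almostPositiveRoots n,
      tauMap (cartanA n) (xiA n) σ v ∈ almostPositiveRoots n) ∧
    (∀ i : Fin n, tauMap (cartanA n) (xiA n) true (negSimpleRoot n i) =
      fun k => if k = i then -(epsA n i) else 0) := by
  refine ⟨fun σ v hv => ?_, fun i => ?_⟩
  · obtain ⟨i, j, hij, rfl⟩ | ⟨i, rfl⟩ := hv
    · exact tauMap_intervalRoot_mem σ hij
    · rw [tauMap_negSimpleRoot]
      split_ifs
      exacts [Or.inl ⟨i, i, le_rfl, rfl⟩, Or.inr ⟨i, rfl⟩]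
  · rw [tauMap_negSimpleRoot, intervalRoot_self]
    funext k
    split_ifs <;> simp_all [negSimpleRoot, epsA]
end
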